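/- arXiv:0811.4163 — 2 statements merged into one kernel-verified Lean document; each statement's English description precedes it below -/
import Mathlib

section
/- For 0 < ρ < ⌊n/2⌋, K_S(q,n,2ρ) ≤ K_I(q,n,ρ) ≤ K_S(q,n,ρ), and K_I(q,n,ρ) ≤ 2 + ∑_{r=ρ+1}^{n-ρ-1} K_C(q,n,r,ρ), where the last bound is realized by adjoining {0} and GF(q)^n to a union over r of minimum-size covering CDCs of covering radius ρ in each Grassmannian E_r(q,n). -/
open Module

/-- The subspace distance `d_S(U,V) = dim(U+V) - dim(U∩V)`. -/
noncomputable def dS {F : Type} [Field F] {n : ℕ} (U V : Submodule F (Fin n → F)) : ℕ :=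
  Module.finrank F ↥(U ⊔ V) - Module.finrank F ↥(U ⊓ V)

/-- The injection distance `d_I(U,V) = max{dim U, dim V} - dim(U∩V)`. -/
noncomputable def dI {F : Type} [Field F] {n : ℕ} (U V : Submodule F (Fin n → F)) : ℕ :=
  max (Module.finrank F ↥U) (Module.finrank F ↥V) - Module.finrank F ↥(U ⊓ V)

/-- Minimum cardinality of a subspace code in `E(q,n)` with subspace covering radius `ρ`. -/
noncomputable def KS (F : Type) [Field F] [Fintype F] (n ρ : ℕ) : ℕ :=
  sInf {m : ℕ | ∃ C : Set (Submodule F (Fin n → F)),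
    m = C.ncard ∧ ∀ U : Submodule F (Fin n → F), ∃ V ∈ C, dS U V ≤ ρ}

/-- Minimum cardinality of a subspace code in `E(q,n)` with injection covering radius `ρ`. -/
noncomputable def KI (F : Type) [Field F] [Fintype F] (n ρ : ℕ) : ℕ :=
  sInf {m : ℕ | ∃ C : Set (Submodule F (Fin n → F)),
    m = C.ncard ∧ ∀ U : Submodule F (Fin n → F), ∃ V ∈ C, dI U V ≤ ρ}

/-- Minimum cardinality of a CDC in `E_r(q,n)` with injection covering radius `ρ` in
`E_r(q,n)`. -/
noncomputable def KC (F : Type) [Field F] [Fintype F] (n r ρ : ℕ) : ℕ :=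
  sInf {m : ℕ | ∃ C : Set (Submodule F (Fin n → F)),
    m = C.ncard ∧ (∀ U ∈ C, finrank F ↥U = r) ∧
      ∀ U : Submodule F (Fin n → F), finrank F ↥U = r → ∃ V ∈ C, dI U V ≤ ρ}

/-!
Since `dim (U + V) + dim (U ∩ V) = dim U + dim V`, one has
`d_S(U, V) = 2 d_I(U, V) - |dim U - dim V|`, hence `d_I ≤ d_S ≤ 2 d_I`: a code of subspace covering
radius `ρ` has injection covering radius `ρ`, and one of injection covering radius `ρ` has
subspace covering radius `2ρ`. For the last bound, `{0}` and `Fⁿ` cover all subspaces of dimension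
at most `ρ` or at least `n - ρ`, and the Grassmannian codes cover the dimensions in between.
-/

section Distances

variable {F : Type} [Field F] {n : ℕ}

lemma finrank_submodule_le (U : Submodule F (Fin n → F)) : finrank F U ≤ n := by
  simpa using U.finrank_le

lemma dI_le_dS (U V : Submodule F (Fin n → F)) : dI U V ≤ dS U V := by
  have hU : finrank F ↥(U ⊓ V) ≤ finrank F U := Submodule.finrank_mono inf_le_left
  have hV : finrank F ↥(U ⊓ V) ≤ finrank F V := Submodule.finrank_mono inf_le_right
  have := Submodule.finrank_sup_add_finrank_inf_eq U V
  unfold dI dS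
  omega

lemma dS_le_two_mul_dI (U V : Submodule F (Fin n → F)) : dS U V ≤ 2 * dI U V := by
  have hU : finrank F ↥(U ⊓ V) ≤ finrank F U := Submodule.finrank_mono inf_le_left
  have hV : finrank F ↥(U ⊓ V) ≤ finrank F V := Submodule.finrank_mono inf_le_right
  have := Submodule.finrank_sup_add_finrank_inf_eq U V
  unfold dI dS
  omega

@[simp]
lemma dS_self (U : Submodule F (Fin n → F)) : dS U U = 0 := by
  rw [dS, sup_idem, inf_idem, Nat.sub_self]

@[simp]
lemma dI_self (U : Submodule F (Fin n → F)) : dI U U = 0 := by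
  rw [dI, inf_idem, max_self, Nat.sub_self]

lemma dI_bot_right (U : Submodule F (Fin n → F)) : dI U ⊥ = finrank F U := by
  rw [dI, inf_bot_eq]
  simp

lemma dI_top_right (U : Submodule F (Fin n → F)) : dI U ⊤ = n - finrank F U := by
  rw [dI, inf_top_eq]
  simp [finrank_submodule_le U]

lemma exists_dI_le_of_covers_grassmannians (ρ : ℕ) (C : ℕ → Set (Submodule F (Fin n → F)))
    (hC : ∀ r ∈ Finset.Icc (ρ + 1) (n - ρ - 1),
      ∀ U : Submodule F (Fin n → F), finrank F U = r → ∃ V ∈ C r, dI U V ≤ ρ)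
    (U : Submodule F (Fin n → F)) :
    ∃ V ∈ (({⊥, ⊤} : Set (Submodule F (Fin n → F))) ∪
      ⋃ r ∈ Finset.Icc (ρ + 1) (n - ρ - 1), C r), dI U V ≤ ρ := by
  have hUn := finrank_submodule_le U
  by_cases hsmall : finrank F U ≤ ρ
  · exact ⟨⊥, by simp, by rwa [dI_bot_right]⟩
  by_cases hbig : n - ρ ≤ finrank F U
  · exact ⟨⊤, by simp, by rw [dI_top_right]; omega⟩
  have hmid : finrank F U ∈ Finset.Icc (ρ + 1) (n - ρ - 1) := by
    rw [Finset.mem_Icc]; omega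
  obtain ⟨V, hV, hUV⟩ := hC _ hmid U rfl
  exact ⟨V, Set.mem_union_right _ (Set.mem_biUnion hmid hV), hUV⟩

end Distances

section CoveringNumbers

variable (F : Type) [Field F] [Fintype F] (n : ℕ)

lemma KS_two_mul_le_KI (ρ : ℕ) : KS F n (2 * ρ) ≤ KI F n ρ := by
  refine csInf_le_csInf' ⟨_, Set.univ, rfl, fun U => ⟨U, trivial, by simp⟩⟩ ?_
  rintro m ⟨C, rfl, hC⟩
  refine ⟨C, rfl, fun U => ?_⟩
  obtain ⟨V, hV, hUV⟩ := hC U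
  exact ⟨V, hV, (dS_le_two_mul_dI U V).trans (by omega)⟩

lemma KI_le_KS (ρ : ℕ) : KI F n ρ ≤ KS F n ρ := by
  refine csInf_le_csInf' ⟨_, Set.univ, rfl, fun U => ⟨U, trivial, by simp⟩⟩ ?_
  rintro m ⟨C, rfl, hC⟩
  refine ⟨C, rfl, fun U => ?_⟩
  obtain ⟨V, hV, hUV⟩ := hC U
  exact ⟨V, hV, (dI_le_dS U V).trans hUV⟩

lemma exists_ncard_eq_KC (r ρ : ℕ) :
    ∃ C : Set (Submodule F (Fin n → F)), KC F n r ρ = C.ncard ∧ (∀ U ∈ C, finrank F U = r) ∧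
      ∀ U : Submodule F (Fin n → F), finrank F U = r → ∃ V ∈ C, dI U V ≤ ρ := by
  have hmem : KC F n r ρ ∈ _ := Nat.sInf_mem
    ⟨_, {W | finrank F W = r}, rfl, fun _ hU => hU, fun U hU => ⟨U, hU, by simp⟩⟩
  exact hmem

lemma KI_le_two_add_sum_KC (ρ : ℕ) :
    KI F n ρ ≤ 2 + ∑ r ∈ Finset.Icc (ρ + 1) (n - ρ - 1), KC F n r ρ := by
  choose C hcard _ hcov using fun r => exists_ncard_eq_KC F n r ρ
  have hKI : KI F n ρ ≤ (({⊥, ⊤} : Set (Submodule F (Fin n → F))) ∪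
      ⋃ r ∈ Finset.Icc (ρ + 1) (n - ρ - 1), C r).ncard :=
    Nat.sInf_le ⟨_, rfl, exists_dI_le_of_covers_grassmannians ρ C fun r _ => hcov r⟩
  have hpair : ({⊥, ⊤} : Set (Submodule F (Fin n → F))).ncard ≤ 2 :=
    (Set.ncard_insert_le _ _).trans (by simp)
  calc KI F n ρ
      ≤ ({⊥, ⊤} : Set (Submodule F (Fin n → F))).ncard +
          (⋃ r ∈ Finset.Icc (ρ + 1) (n - ρ - 1), C r).ncard :=
        hKI.trans (Set.ncard_union_le _ _)
    _ ≤ 2 + ∑ r ∈ Finset.Icc (ρ + 1) (n - ρ - 1), (C r).ncard :=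
        add_le_add hpair (Finset.set_ncard_biUnion_le _ _)
    _ = 2 + ∑ r ∈ Finset.Icc (ρ + 1) (n - ρ - 1), KC F n r ρ := by
        simp only [hcard]

end CoveringNumbers

theorem KI_relations_general (F : Type) [Field F] [Fintype F] (n ρ : ℕ) :
    (KS F n (2 * ρ) ≤ KI F n ρ) ∧
    (KI F n ρ ≤ KS F n ρ) ∧
    (KI F n ρ ≤ 2 + ∑ r ∈ Finset.Icc (ρ + 1) (n - ρ - 1), KC F n r ρ) ∧
    (∀ C : ℕ → Set (Submodule F (Fin n → F)),
      (∀ r ∈ Finset.Icc (ρ + 1) (n - ρ - 1),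
        (∀ U ∈ C r, finrank F ↥U = r) ∧
        (∀ U : Submodule F (Fin n → F), finrank F ↥U = r → ∃ V ∈ C r, dI U V ≤ ρ)) →
      ∀ U : Submodule F (Fin n → F),
        ∃ V ∈ (({⊥, ⊤} : Set (Submodule F (Fin n → F))) ∪
          ⋃ r ∈ Finset.Icc (ρ + 1) (n - ρ - 1), C r), dI U V ≤ ρ) :=
  ⟨KS_two_mul_le_KI F n ρ, KI_le_KS F n ρ, KI_le_two_add_sum_KC F n ρ,
    fun C hC => exists_dI_le_of_covers_grassmannians ρ C fun r hr => (hC r hr).2⟩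

theorem KI_relations (F : Type) [Field F] [Fintype F] (n ρ : ℕ)
    (h1 : 0 < ρ) (h2 : ρ < n / 2) :
    (KS F n (2 * ρ) ≤ KI F n ρ) ∧
    (KI F n ρ ≤ KS F n ρ) ∧
    (KI F n ρ ≤ 2 + ∑ r ∈ Finset.Icc (ρ + 1) (n - ρ - 1), KC F n r ρ) ∧
    (∀ C : ℕ → Set (Submodule F (Fin n → F)),
      (∀ r ∈ Finset.Icc (ρ + 1) (n - ρ - 1),
        (∀ U ∈ C r, finrank F ↥U = r) ∧
        (∀ U : Submodule F (Fin n → F), finrank F ↥U = r → ∃ V ∈ C r, dI U V ≤ ρ)) →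
      ∀ U : Submodule F (Fin n → F),
        ∃ V ∈ (({⊥, ⊤} : Set (Submodule F (Fin n → F))) ∪
          ⋃ r ∈ Finset.Icc (ρ + 1) (n - ρ - 1), C r), dI U V ≤ ρ) :=
  KI_relations_general F n ρ
end

section
/- Let ρ ≥ 1, and let J_1 = {0} ∪ {⌊n/2⌋ - ρ - i(2ρ+1) : 0 ≤ i ≤ ⌊(⌊n/2⌋-ρ)/(2ρ+1)⌋} and J_2 = {n - j : j ∈ J_1}. Then the union of all Grassmannians ∪_{r ∈ J_1 ∪ J_2} E_r(q,n) is a subspace code with subspace covering radius at most ρ, so K_S(q,n,ρ) ≤ ∑_{r ∈ J_1 ∪ J_2} [n choose r]_q. -/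
open Module

/-- The Gaussian binomial coefficient `[n choose r]_q`, via its product formula. -/
noncomputable def gaussBinom (q n r : ℕ) : ℝ :=
  ∏ i ∈ Finset.range r, (((q : ℝ) ^ n - (q : ℝ) ^ i) / ((q : ℝ) ^ r - (q : ℝ) ^ i))

/-- The dimension set `J_1 = {0} ∪ {⌊n/2⌋ - ρ - i(2ρ+1) : 0 ≤ i ≤ ⌊(⌊n/2⌋-ρ)/(2ρ+1)⌋}`. -/
def J1 (n ρ : ℕ) : Finset ℕ :=
  {0} ∪ (Finset.range ((n / 2 - ρ) / (2 * ρ + 1) + 1)).image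
    (fun i => n / 2 - ρ - i * (2 * ρ + 1))

/-- The dimension set `J_2 = {n - j : j ∈ J_1}`. -/
def J2 (n ρ : ℕ) : Finset ℕ := (J1 n ρ).image (fun j => n - j)

/-! ### Auxiliary lemmas -/

section Exists

variable {K M : Type*} [Field K] [AddCommGroup M] [Module K M]

lemma aux_exists_submodule [FiniteDimensional K M] (r : ℕ) (h : r ≤ finrank K M) :
    ∃ p : Submodule K M, finrank K ↥p = r := by
  let b := Module.finBasis K M
  let c : Fin r → M := fun i => b (Fin.castLE h i)
  have hc : LinearIndependent K c :=
    b.linearIndependent.comp _ (Fin.castLE_injective h)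
  exact ⟨Submodule.span K (Set.range c), by
    rw [finrank_span_eq_card hc, Fintype.card_fin]⟩

lemma aux_exists_le [FiniteDimensional K M] (U : Submodule K M) (r : ℕ)
    (h : r ≤ finrank K ↥U) : ∃ V ≤ U, finrank K ↥V = r := by
  obtain ⟨p, hp⟩ := aux_exists_submodule (K := K) (M := ↥U) r h
  exact ⟨p.map U.subtype, Submodule.map_subtype_le U p, by
    rw [Submodule.finrank_map_subtype_eq, hp]⟩

lemma aux_exists_ge [FiniteDimensional K M] (U : Submodule K M) (r : ℕ)
    (h1 : finrank K ↥U ≤ r) (h2 : r ≤ finrank K M) :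
    ∃ V, U ≤ V ∧ finrank K ↥V = r := by
  obtain ⟨W, hW⟩ := U.exists_isCompl
  have hadd := Submodule.finrank_add_eq_of_isCompl hW
  obtain ⟨S, hSW, hS⟩ := aux_exists_le W (r - finrank K ↥U) (by omega)
  refine ⟨U ⊔ S, le_sup_left, ?_⟩
  have hdisj : U ⊓ S = ⊥ := disjoint_iff.mp (hW.disjoint.mono_right hSW)
  have hsum := Submodule.finrank_sup_add_finrank_inf_eq U S
  rw [hdisj] at hsum
  simp only [finrank_bot] at hsum
  omega

end Exists

/-! ### Covering lemmas -/

lemma step_cover (b m c : ℕ) (hb : 0 < b) (hc : c ≤ m) :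
    ∃ i ≤ m / b, c ≤ m - i * b ∧ m - i * b < c + b := by
  refine ⟨(m - c) / b, Nat.div_le_div_right (Nat.sub_le _ _), ?_⟩
  obtain ⟨P, hP⟩ : ∃ P, P = (m - c) / b * b := ⟨_, rfl⟩
  obtain ⟨s, hs⟩ : ∃ s, s = (m - c) % b := ⟨_, rfl⟩
  have h2 : s < b := hs ▸ Nat.mod_lt _ hb
  have h1 : P + s = m - c := by
    rw [hP, hs, mul_comm]; exact Nat.div_add_mod _ _
  rw [← hP]
  omega

lemma cover_J1 (n ρ d : ℕ) (hd : d ≤ n / 2) :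
    ∃ r ∈ J1 n ρ, d ≤ r + ρ ∧ r ≤ d + ρ ∧ r ≤ n / 2 := by
  by_cases hdρ : d ≤ ρ
  · exact ⟨0, Finset.mem_union_left _ (Finset.mem_singleton.2 rfl), by omega, by omega, by omega⟩
  · have hpos : 0 < 2 * ρ + 1 := by omega
    have hc : d - ρ ≤ n / 2 - ρ := by omega
    obtain ⟨i, hile, h3, h4⟩ := step_cover (2 * ρ + 1) (n / 2 - ρ) (d - ρ) hpos hc
    refine ⟨n / 2 - ρ - i * (2 * ρ + 1), ?_, ?_⟩
    · apply Finset.mem_union_right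
      exact Finset.mem_image.2 ⟨i, Finset.mem_range.2 (Nat.lt_succ_of_le hile), rfl⟩
    · have h5 : n / 2 - ρ - i * (2 * ρ + 1) ≤ n / 2 - ρ := Nat.sub_le _ _
      generalize n / 2 - ρ - i * (2 * ρ + 1) = r at h3 h4 h5 ⊢
      omega

lemma cover_J (n ρ d : ℕ) (hd : d ≤ n) :
    ∃ r ∈ J1 n ρ ∪ J2 n ρ, d ≤ r + ρ ∧ r ≤ d + ρ ∧ r ≤ n := by
  by_cases h : d ≤ n / 2
  · obtain ⟨r, hr, h1, h2, h3⟩ := cover_J1 n ρ d h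
    exact ⟨r, Finset.mem_union_left _ hr, h1, h2, by omega⟩
  · obtain ⟨r', hr', h1, h2, h3⟩ := cover_J1 n ρ (n - d) (by omega)
    exact ⟨n - r', Finset.mem_union_right _ (Finset.mem_image_of_mem _ hr'),
      by omega, by omega, by omega⟩

lemma mem_J_le (n ρ r : ℕ) (hr : r ∈ J1 n ρ ∪ J2 n ρ) : r ≤ n := by
  rcases Finset.mem_union.1 hr with h | h
  · rcases Finset.mem_union.1 h with h0 | him
    · rw [Finset.mem_singleton.1 h0]; exact Nat.zero_le n
    · obtain ⟨i, _, rfl⟩ := Finset.mem_image.1 him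
      exact le_trans (Nat.sub_le _ _) (le_trans (Nat.sub_le _ _) (Nat.div_le_self n 2))
  · obtain ⟨j, _, rfl⟩ := Finset.mem_image.1 h
    exact Nat.sub_le _ _

lemma cover_sub (F : Type) [Field F] (n ρ : ℕ) (U : Submodule F (Fin n → F)) :
    ∃ V : Submodule F (Fin n → F),
      finrank F ↥V ∈ J1 n ρ ∪ J2 n ρ ∧ dS U V ≤ ρ := by
  have hn : finrank F (Fin n → F) = n := by
    rw [Module.finrank_fintype_fun_eq_card, Fintype.card_fin]
  have hU : finrank F ↥U ≤ n := by
    have := Submodule.finrank_le U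
    rwa [hn] at this
  obtain ⟨r, hrJ, h1, h2, h3⟩ := cover_J n ρ (finrank F ↥U) hU
  by_cases hcase : r ≤ finrank F ↥U
  · obtain ⟨V, hVU, hV⟩ := aux_exists_le U r hcase
    refine ⟨V, by rw [hV]; exact hrJ, ?_⟩
    unfold dS
    rw [sup_eq_left.mpr hVU, inf_eq_right.mpr hVU, hV]
    omega
  · obtain ⟨V, hUV, hV⟩ := aux_exists_ge U r (by omega) (by rw [hn]; exact h3)
    refine ⟨V, by rw [hV]; exact hrJ, ?_⟩
    unfold dS
    rw [sup_eq_right.mpr hUV, inf_eq_left.mpr hUV, hV]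
    omega

lemma nat_card_sigma {I : Type*} [Fintype I] (g : I → Type*) [∀ i, Finite (g i)] :
    Nat.card (Σ i, g i) = ∑ i, Nat.card (g i) := by
  letI : ∀ i, Fintype (g i) := fun i => Fintype.ofFinite _
  simp [Nat.card_eq_fintype_card, Fintype.card_sigma]

/-! ### Counting lemmas -/

section Count

variable (F : Type) [Field F] [Fintype F] (n : ℕ)

local instance : Finite (Submodule F (Fin n → F)) :=
  Finite.of_injective (fun W => (W : Set (Fin n → F))) SetLike.coe_injective

/-- The fiber of the span map over `W` is equivalent to independent tuples in `W`. -/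
noncomputable def fiberEquiv (r : ℕ) (W : Submodule F (Fin n → F)) (hW : finrank F ↥W = r) :
    {t : Fin r → ↥W // LinearIndependent F t} ≃
      {a : {s : Fin r → (Fin n → F) // LinearIndependent F s} //
        Submodule.span F (Set.range a.1) = W} where
  toFun t := ⟨⟨fun i => (t.1 i : Fin n → F), t.2.map' W.subtype (Submodule.ker_subtype W)⟩, by
    have htop : Submodule.span F (Set.range t.1) = ⊤ :=
      t.2.span_eq_top_of_card_eq_finrank' (by rw [Fintype.card_fin, hW])
    have hrange : Set.range (fun i => (t.1 i : Fin n → F)) = W.subtype '' Set.range t.1 := by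
      rw [← Set.range_comp]; rfl
    rw [hrange, ← Submodule.map_span, htop, Submodule.map_top, Submodule.range_subtype]⟩
  invFun a := ⟨fun i => ⟨a.1.1 i, by
      have h := Submodule.subset_span (R := F) (s := Set.range a.1.1) ⟨i, rfl⟩
      rwa [a.2] at h⟩,
    LinearIndependent.of_comp W.subtype (by exact a.1.2)⟩
  left_inv t := Subtype.ext (funext fun i => Subtype.ext rfl)
  right_inv a := Subtype.ext (Subtype.ext (funext fun i => rfl))

lemma card_grass (r : ℕ) (hr : r ≤ n) :
    Nat.card {W : Submodule F (Fin n → F) // finrank F ↥W = r} *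
        ∏ i ∈ Finset.range r, (Fintype.card F ^ r - Fintype.card F ^ i)
      = ∏ i ∈ Finset.range r, (Fintype.card F ^ n - Fintype.card F ^ i) := by
  classical
  have hn : finrank F (Fin n → F) = n := by
    rw [Module.finrank_fintype_fun_eq_card, Fintype.card_fin]
  have key := card_linearIndependent (K := F) (V := Fin n → F) (k := r) (by rw [hn]; exact hr)
  rw [hn] at key
  set f : {s : Fin r → (Fin n → F) // LinearIndependent F s} →
      {W : Submodule F (Fin n → F) // finrank F ↥W = r} :=
    fun a => ⟨Submodule.span F (Set.range a.1), by
      rw [finrank_span_eq_card a.2, Fintype.card_fin]⟩ with hf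
  have hfiber : ∀ W : {W : Submodule F (Fin n → F) // finrank F ↥W = r},
      Nat.card {a // f a = W} =
        ∏ i ∈ Finset.range r, (Fintype.card F ^ r - Fintype.card F ^ i) := by
    intro W
    have e2 : {a // f a = W} ≃ {t : Fin r → ↥W.1 // LinearIndependent F t} := by
      refine (Equiv.subtypeEquivRight ?_).trans (fiberEquiv F n r W.1 W.2).symm
      intro a
      constructor
      · intro h; exact congrArg Subtype.val h
      · intro h; exact Subtype.ext h
    rw [Nat.card_congr e2]
    have hc := card_linearIndependent (K := F) (V := ↥W.1) (k := r) (by rw [W.2])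
    rw [W.2] at hc
    rw [hc]
    exact Fin.prod_univ_eq_prod_range (fun i => Fintype.card F ^ r - Fintype.card F ^ i) r
  letI : Fintype {W : Submodule F (Fin n → F) // finrank F ↥W = r} := Fintype.ofFinite _
  rw [Nat.card_congr (Equiv.sigmaFiberEquiv f).symm,
    nat_card_sigma (fun W : {W : Submodule F (Fin n → F) // finrank F ↥W = r} => {a // f a = W})]
      at key
  calc Nat.card {W : Submodule F (Fin n → F) // finrank F ↥W = r} *
        ∏ i ∈ Finset.range r, (Fintype.card F ^ r - Fintype.card F ^ i)
      = ∑ _W : {W : Submodule F (Fin n → F) // finrank F ↥W = r},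
          ∏ i ∈ Finset.range r, (Fintype.card F ^ r - Fintype.card F ^ i) := by
        rw [Finset.sum_const, Nat.card_eq_fintype_card, ← Finset.card_univ, smul_eq_mul]
    _ = ∑ W : {W : Submodule F (Fin n → F) // finrank F ↥W = r}, Nat.card {a // f a = W} :=
        Finset.sum_congr rfl fun W _ => (hfiber W).symm
    _ = ∏ i : Fin r, (Fintype.card F ^ n - Fintype.card F ^ (i : ℕ)) := key
    _ = ∏ i ∈ Finset.range r, (Fintype.card F ^ n - Fintype.card F ^ i) :=
        Fin.prod_univ_eq_prod_range (fun i => Fintype.card F ^ n - Fintype.card F ^ i) r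

lemma grass_real (r : ℕ) (hr : r ≤ n) :
    (Nat.card {W : Submodule F (Fin n → F) // finrank F ↥W = r} : ℝ)
      = gaussBinom (Fintype.card F) n r := by
  have hq : 1 < Fintype.card F := Fintype.one_lt_card
  have h := card_grass F n r hr
  have hqR : (1 : ℝ) < (Fintype.card F : ℝ) := by exact_mod_cast hq
  have hpos : ∀ i ∈ Finset.range r,
      (0 : ℝ) < (Fintype.card F : ℝ) ^ r - (Fintype.card F : ℝ) ^ i := by
    intro i hi
    have := pow_lt_pow_right₀ hqR (Finset.mem_range.1 hi)
    linarith
  have cast1 : ∀ i ∈ Finset.range r,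
      ((Fintype.card F ^ r - Fintype.card F ^ i : ℕ) : ℝ)
        = (Fintype.card F : ℝ) ^ r - (Fintype.card F : ℝ) ^ i := by
    intro i hi
    have hle : Fintype.card F ^ i ≤ Fintype.card F ^ r :=
      Nat.pow_le_pow_right (by omega) (le_of_lt (Finset.mem_range.1 hi))
    push_cast [hle]
    ring
  have cast2 : ∀ i ∈ Finset.range r,
      ((Fintype.card F ^ n - Fintype.card F ^ i : ℕ) : ℝ)
        = (Fintype.card F : ℝ) ^ n - (Fintype.card F : ℝ) ^ i := by
    intro i hi
    have hle : Fintype.card F ^ i ≤ Fintype.card F ^ n :=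
      Nat.pow_le_pow_right (by omega) (le_trans (le_of_lt (Finset.mem_range.1 hi)) hr)
    push_cast [hle]
    ring
  have hcast : (Nat.card {W : Submodule F (Fin n → F) // finrank F ↥W = r} : ℝ) *
      ∏ i ∈ Finset.range r, ((Fintype.card F : ℝ) ^ r - (Fintype.card F : ℝ) ^ i)
        = ∏ i ∈ Finset.range r, ((Fintype.card F : ℝ) ^ n - (Fintype.card F : ℝ) ^ i) := by
    rw [← Finset.prod_congr rfl cast1, ← Finset.prod_congr rfl cast2, ← Nat.cast_prod,
      ← Nat.cast_prod, ← Nat.cast_mul, h]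
  unfold gaussBinom
  rw [Finset.prod_div_distrib, eq_div_iff (ne_of_gt (Finset.prod_pos hpos))]
  exact hcast

lemma card_code (J : Finset ℕ) :
    Nat.card {W : Submodule F (Fin n → F) // finrank F ↥W ∈ J}
      = ∑ r ∈ J, Nat.card {W : Submodule F (Fin n → F) // finrank F ↥W = r} := by
  classical
  set g : {W : Submodule F (Fin n → F) // finrank F ↥W ∈ J} → {r : ℕ // r ∈ J} :=
    fun W => ⟨finrank F ↥W.1, W.2⟩ with hg
  have hfib : ∀ s : {r : ℕ // r ∈ J},
      Nat.card {W // g W = s} = Nat.card {W : Submodule F (Fin n → F) // finrank F ↥W = s.1} := by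
    intro s
    refine Nat.card_congr ⟨fun W => ⟨W.1.1, congrArg Subtype.val W.2⟩,
      fun W => ⟨⟨W.1, by rw [W.2]; exact s.2⟩, Subtype.ext W.2⟩, ?_, ?_⟩
    · intro W; exact Subtype.ext (Subtype.ext rfl)
    · intro W; exact Subtype.ext rfl
  rw [Nat.card_congr (Equiv.sigmaFiberEquiv g).symm,
    nat_card_sigma (fun s : {r : ℕ // r ∈ J} => {W // g W = s})]
  rw [Finset.sum_congr rfl fun s _ => hfib s]
  exact Finset.sum_coe_sort J
    (fun r => Nat.card {W : Submodule F (Fin n → F) // finrank F ↥W = r})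

end Count

theorem union_of_Grassmannians_covers (F : Type) [Field F] [Fintype F] (n ρ : ℕ)
    (hρ : 1 ≤ ρ) :
    (∀ U : Submodule F (Fin n → F), ∃ V : Submodule F (Fin n → F),
      finrank F ↥V ∈ J1 n ρ ∪ J2 n ρ ∧ dS U V ≤ ρ) ∧
    ((KS F n ρ : ℝ) ≤ ∑ r ∈ J1 n ρ ∪ J2 n ρ, gaussBinom (Fintype.card F) n r) := by
  classical
  have part1 : ∀ U : Submodule F (Fin n → F), ∃ V : Submodule F (Fin n → F),
      finrank F ↥V ∈ J1 n ρ ∪ J2 n ρ ∧ dS U V ≤ ρ := cover_sub F n ρ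
  refine ⟨part1, ?_⟩
  set C : Set (Submodule F (Fin n → F)) := {W | finrank F ↥W ∈ J1 n ρ ∪ J2 n ρ} with hC
  have hKS : KS F n ρ ≤ C.ncard := by
    apply Nat.sInf_le
    refine ⟨C, rfl, fun U => ?_⟩
    obtain ⟨V, h1, h2⟩ := part1 U
    exact ⟨V, h1, h2⟩
  have hcard : (C.ncard : ℝ) = ∑ r ∈ J1 n ρ ∪ J2 n ρ,
      (Nat.card {W : Submodule F (Fin n → F) // finrank F ↥W = r} : ℝ) := by
    have h1 : C.ncard = Nat.card {W : Submodule F (Fin n → F) // finrank F ↥W ∈ J1 n ρ ∪ J2 n ρ} := by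
      rw [← Nat.card_coe_set_eq]
      rfl
    rw [h1, card_code F n (J1 n ρ ∪ J2 n ρ), Nat.cast_sum]
  calc (KS F n ρ : ℝ) ≤ (C.ncard : ℝ) := by exact_mod_cast hKS
    _ = ∑ r ∈ J1 n ρ ∪ J2 n ρ,
        (Nat.card {W : Submodule F (Fin n → F) // finrank F ↥W = r} : ℝ) := hcard
    _ = ∑ r ∈ J1 n ρ ∪ J2 n ρ, gaussBinom (Fintype.card F) n r :=
        Finset.sum_congr rfl fun r hrJ => grass_real F n r (mem_J_le n ρ r hrJ)
end
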